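/- arXiv:2311.08532 — 9 statements merged into one kernel-verified Lean document; each statement's English description precedes it below -/
import Mathlib

section
/- For every natural number n and real numbers x, y with x ≠ 0, the sum over k from 0 to n of binom(n,k) * x^k * y^(n-k) / ((k+1)*(k+2)) equals ((x+y)^(n+2) - ((n+2)*x + y) * y^(n+1)) / ((n+1)*(n+2)*x^2). -/
theorem stmt_2 (n : ℕ) (x y : ℝ) (hx : x ≠ 0) :
    ∑ k ∈ Finset.range (n + 1),
        (n.choose k : ℝ) * x ^ k * y ^ (n - k) / ((k + 1) * (k + 2))
      = ((x + y) ^ (n + 2) - ((n + 2) * x + y) * y ^ (n + 1))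
          / ((n + 1) * (n + 2) * x ^ 2) := by
  have hnat : ∀ k, k ≤ n →
      (n.choose k) * ((n+1)*(n+2)) = ((n+2).choose (k+2)) * ((k+1)*(k+2)) := by
    intro k hk
    have h1 : (n+1) * n.choose k = (n+1).choose (k+1) * (k+1) :=
      Nat.add_one_mul_choose_eq n k
    have h2 : (n+2) * (n+1).choose (k+1) = (n+2).choose (k+2) * (k+2) :=
      Nat.add_one_mul_choose_eq (n+1) (k+1)
    calc (n.choose k) * ((n+1)*(n+2))
        = (n+2) * ((n+1) * n.choose k) := by ring
      _ = (n+2) * ((n+1).choose (k+1) * (k+1)) := by rw [h1]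
      _ = ((n+2) * (n+1).choose (k+1)) * (k+1) := by ring
      _ = ((n+2).choose (k+2) * (k+2)) * (k+1) := by rw [h2]
      _ = ((n+2).choose (k+2)) * ((k+1)*(k+2)) := by ring
  have hterm : ∀ k ∈ Finset.range (n + 1),
      (n.choose k : ℝ) * x ^ k * y ^ (n - k) / ((k + 1) * (k + 2))
        = ((n+2).choose (k+2) : ℝ) * x ^ (k+2) * y ^ (n - k)
            / ((n + 1) * (n + 2) * x ^ 2) := by
    intro k hk
    have hk' : k ≤ n := Nat.lt_succ_iff.mp (Finset.mem_range.mp hk)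
    have h := hnat k hk'
    have hR : ((n.choose k : ℝ)) * ((n+1)*(n+2))
        = ((n+2).choose (k+2) : ℝ) * ((k+1)*(k+2)) := by
      exact_mod_cast congrArg (Nat.cast : ℕ → ℝ) h
    have hk1 : ((k:ℝ)+1) ≠ 0 := by positivity
    have hk2 : ((k:ℝ)+2) ≠ 0 := by positivity
    have hn1 : ((n:ℝ)+1) ≠ 0 := by positivity
    have hn2 : ((n:ℝ)+2) ≠ 0 := by positivity
    rw [div_eq_div_iff (by positivity) (by positivity : ((n:ℝ)+1)*((n:ℝ)+2)*x^2 ≠ 0)]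
    linear_combination (x ^ k * y ^ (n - k) * x ^ 2) * hR
  rw [Finset.sum_congr rfl hterm, ← Finset.sum_div]
  congr 1
  have hpow := add_pow x y (n+2)
  rw [Finset.sum_range_succ' _ (n+2), Finset.sum_range_succ' _ (n+1)] at hpow
  have hsum : ∀ k ∈ Finset.range (n+1),
      x ^ (k+1+1) * y ^ (n + 2 - (k+1+1)) * ((n+2).choose (k+1+1) : ℝ)
        = ((n+2).choose (k+2) : ℝ) * x ^ (k+2) * y ^ (n - k) := by
    intro k hk
    have : n + 2 - (k + 1 + 1) = n - k := by omega
    rw [this]; ring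
  rw [Finset.sum_congr rfl hsum] at hpow
  have e1 : n + 2 - (0 + 1) = n + 1 := by omega
  have e2 : n + 2 - 0 = n + 2 := by omega
  rw [e1, e2] at hpow
  simp only [Nat.choose_one_right, Nat.choose_zero_right, pow_one, zero_add,
    Nat.cast_one, one_mul] at hpow
  rw [hpow]
  push_cast
  ring
end

section
/- For every natural number n and real numbers x, y with x ≠ 0, the sum over k from 0 to n of binom(n,k) * x^k * y^(n-k) / (k+2) equals (((n+1)*x - y)*(x+y)^(n+1) + y^(n+2)) / ((n+1)*(n+2)*x^2). -/
theorem aux1 (x y : ℝ) (m : ℕ) :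
    ∑ j ∈ Finset.range (m+2), (j:ℝ) * ((m+1).choose j : ℝ) * x^j * y^(m+1-j)
      = (m+1) * x * (x+y)^m := by
  rw [Finset.sum_range_succ']
  simp only [Nat.cast_zero, zero_mul, add_zero]
  rw [add_pow, Finset.mul_sum]
  apply Finset.sum_congr rfl
  intro i hi
  have h : ((i:ℝ)+1) * ((m+1).choose (i+1) : ℝ) = (m+1) * (m.choose i : ℝ) := by
    have h0 : (m+1) * m.choose i = (m+1).choose (i+1) * (i+1) := Nat.add_one_mul_choose_eq m i
    have := congrArg (Nat.cast : ℕ → ℝ) h0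
    push_cast at this
    linarith
  have h2 : m + 1 - (i+1) = m - i := by omega
  rw [h2]
  push_cast
  linear_combination (x^(i+1) * y^(m-i)) * h

theorem stmt_3 (n : ℕ) (x y : ℝ) (hx : x ≠ 0) :
    ∑ k ∈ Finset.range (n + 1), (n.choose k : ℝ) * x ^ k * y ^ (n - k) / (k + 2)
      = (((n + 1) * x - y) * (x + y) ^ (n + 1) + y ^ (n + 2))
          / ((n + 1) * (n + 2) * x ^ 2) := by
  have hD : ((n:ℝ)+1) * ((n:ℝ)+2) * x^2 ≠ 0 := by positivity
  have step1 : ∀ k ∈ Finset.range (n+1),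
      (n.choose k : ℝ) * x ^ k * y ^ (n - k) / (k + 2)
      = (((k:ℝ)+2)-1) * ((n+2).choose (k+2) : ℝ) * x^(k+2) * y^(n+2-(k+2))
          / (((n:ℝ)+1) * ((n:ℝ)+2) * x^2) := by
    intro k hk
    have hchoose : (n+2) * ((n+1) * n.choose k) = (n+2).choose (k+2) * (k+2) * (k+1) := by
      rw [Nat.add_one_mul_choose_eq n k, ← mul_assoc, Nat.add_one_mul_choose_eq (n+1) (k+1)]
    have hc : ((n:ℝ)+2) * (((n:ℝ)+1) * (n.choose k : ℝ))
        = ((n+2).choose (k+2) : ℝ) * ((k:ℝ)+2) * ((k:ℝ)+1) := by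
      exact_mod_cast congrArg (Nat.cast : ℕ → ℝ) hchoose
    have h2 : n + 2 - (k+2) = n - k := by omega
    rw [h2]
    have hk2 : ((k:ℝ)+2) ≠ 0 := by positivity
    rw [div_eq_div_iff hk2 hD]
    linear_combination (x^(k+2) * y^(n-k)) * hc
  rw [Finset.sum_congr rfl step1, ← Finset.sum_div]
  set g : ℕ → ℝ := fun j => ((j:ℝ)-1) * ((n+2).choose j : ℝ) * x^j * y^(n+2-j) with hg
  have hshift : ∑ j ∈ Finset.range (n+3), g j
      = (∑ k ∈ Finset.range (n+1), g (k+2)) + g 1 + g 0 := by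
    rw [Finset.sum_range_succ', Finset.sum_range_succ']
  have hg0 : g 0 = -y^(n+2) := by simp [hg]
  have hg1 : g 1 = 0 := by simp [hg]
  have hsum : ∑ k ∈ Finset.range (n+1),
      (((k:ℝ)+2)-1) * ((n+2).choose (k+2) : ℝ) * x^(k+2) * y^(n+2-(k+2))
      = ∑ j ∈ Finset.range (n+3), g j + y^(n+2) := by
    have e : ∀ k ∈ Finset.range (n+1), (((k:ℝ)+2)-1) * ((n+2).choose (k+2) : ℝ)
        * x^(k+2) * y^(n+2-(k+2)) = g (k+2) := by
      intro k _; simp only [hg]; push_cast; ring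
    rw [Finset.sum_congr rfl e, hshift, hg0, hg1]
    ring
  rw [hsum]
  have hS : ∑ j ∈ Finset.range (n+3), g j
      = ((n:ℝ)+2) * x * (x+y)^(n+1) - (x+y)^(n+2) := by
    have e1 : ∀ j ∈ Finset.range (n+3), g j
        = (j:ℝ) * ((n+2).choose j : ℝ) * x^j * y^(n+2-j)
          - x^j * y^(n+2-j) * ((n+2).choose j : ℝ) := by
      intro j hj; simp only [hg]; ring
    rw [Finset.sum_congr rfl e1, Finset.sum_sub_distrib, ← add_pow]
    have := aux1 x y (n+1)
    rw [show n+1+2 = n+3 by omega] at this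
    rw [show n+1+1 = n+2 by omega] at this
    rw [this]
    push_cast
    ring
  rw [hS]
  congr 1
  ring
end

section
/- Let q ∈ (0,1], V > 0, n ≥ 1 a natural number, and let F : [cl, cu] → [0,1] be a continuous, strictly increasing cumulative distribution function with F(cl)=0, F(cu)=1, where 0 ≤ cl < cu. Define Φ(c) = (1 - (1 - q*F(c))^n)/(n*F(c)) for c > cl and Φ(cl) = q. If cl < q*V and V*(1-(1-q)^n)/n < cu, then there exists a unique c* ∈ (cl, cu) with c* = V*Φ(c*). -/
theorem stmt_6 (q V : ℝ) (hq0 : 0 < q) (hq1 : q ≤ 1) (hV : 0 < V)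
    (n : ℕ) (hn : 1 ≤ n) (cl cu : ℝ) (hcl : 0 ≤ cl) (hlt : cl < cu)
    (F : ℝ → ℝ) (hFcont : ContinuousOn F (Set.Icc cl cu))
    (hFmono : StrictMonoOn F (Set.Icc cl cu))
    (hFcl : F cl = 0) (hFcu : F cu = 1)
    (hint1 : cl < q * V) (hint2 : V * (1 - (1 - q) ^ n) / n < cu) :
    ∃! c : ℝ, c ∈ Set.Ioo cl cu ∧
      c = V * (if cl < c then (1 - (1 - q * F c) ^ n) / (n * F c) else q) := by
  have hn0 : (0:ℝ) < (n:ℝ) := by exact_mod_cast Nat.pos_of_ne_zero (by omega)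
  set S : ℝ → ℝ := fun x => ∑ k ∈ Finset.range n, (1 - q*x)^k with hS
  have hgeo : ∀ x : ℝ, 1 - (1 - q*x)^n = q*x * S x := by
    intro x
    simp only [hS]
    linear_combination geom_sum_mul (1 - q*x) n
  -- the Phi formula
  have hphi : ∀ x : ℝ, x ≠ 0 → (1 - (1 - q*x)^n)/((n:ℝ) * x) = q * S x / n := by
    intro x hx
    rw [hgeo x]
    field_simp
  -- bounds on S
  have hbase : ∀ x : ℝ, 0 ≤ x → x ≤ 1 → 0 ≤ 1 - q*x ∧ 1 - q*x ≤ 1 := by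
    intro x h0 h1
    constructor <;> nlinarith
  have hSge : ∀ x : ℝ, 0 ≤ x → x ≤ 1 → (n:ℝ) * (1 - q*x)^(n-1) ≤ S x := by
    intro x h0 h1
    obtain ⟨hb0, hb1⟩ := hbase x h0 h1
    calc (n:ℝ) * (1 - q*x)^(n-1) = ∑ k ∈ Finset.range n, (1 - q*x)^(n-1) := by simp [mul_comm]
      _ ≤ S x := by
          apply Finset.sum_le_sum
          intro k hk
          exact pow_le_pow_of_le_one hb0 hb1 (by have := Finset.mem_range.mp hk; omega)
  have hSanti : ∀ a b : ℝ, a ≤ b → b ≤ 1 → S b ≤ S a := by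
    intro a b hab hb1
    apply Finset.sum_le_sum
    intro k _
    apply pow_le_pow_left₀ (by nlinarith) (by nlinarith)
  -- facts about F
  have hFmem : ∀ c : ℝ, cl < c → c ≤ cu → 0 < F c ∧ F c ≤ 1 := by
    intro c h1 h2
    have hc : c ∈ Set.Icc cl cu := ⟨by linarith, h2⟩
    constructor
    · rw [← hFcl]; exact hFmono ⟨le_rfl, hlt.le⟩ hc h1
    · rw [← hFcu]; exact hFmono.monotoneOn hc ⟨by linarith, le_rfl⟩ h2
  -- choose M and epsilon
  set M : ℝ := (cl + q*V)/2 with hM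
  have hqV : 0 < q*V := mul_pos hq0 hV
  have hMcl : cl < M := by simp only [hM]; linarith
  have hMqV : M < q*V := by simp only [hM]; linarith
  set ε : ℝ := min (1/2) ((q*V - M)/(2*(q*V)*n)) with hε
  have hε0 : 0 < ε := lt_min (by norm_num) (div_pos (by linarith) (by positivity))
  have hε1 : ε < 1 := lt_of_le_of_lt (min_le_left _ _) (by norm_num)
  have hεle : ε ≤ (q*V - M)/(2*(q*V)*n) := min_le_right _ _
  have hber : 1 - (n:ℝ)*ε ≤ (1-ε)^(n-1) := by
    have h := one_add_mul_le_pow (a := -ε) (by linarith) (n-1)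
    have hc : ((n-1 : ℕ):ℝ) ≤ (n:ℝ) := by
      have h2 : ((n-1:ℕ):ℝ) = (n:ℝ) - 1 := by push_cast [Nat.cast_sub hn]; ring
      rw [h2]; linarith
    calc 1 - (n:ℝ)*ε ≤ 1 + ((n-1:ℕ):ℝ) * (-ε) := by nlinarith
      _ ≤ (1 + -ε)^(n-1) := h
      _ = (1-ε)^(n-1) := by ring_nf
  have hεb : M < V * (q * ((n:ℝ) * (1-ε)^(n-1)) / n) := by
    have he : V * (q * ((n:ℝ) * (1-ε)^(n-1)) / n) = (q*V) * (1-ε)^(n-1) := by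
      field_simp
    rw [he]
    have h2 : ε * (2*(q*V)*n) ≤ q*V - M := (le_div_iff₀ (by positivity)).mp hεle
    nlinarith [mul_le_mul_of_nonneg_left hber hqV.le]
  -- find c₀ near cl
  have hcw : ContinuousWithinAt F (Set.Icc cl cu) cl := hFcont cl ⟨le_rfl, hlt.le⟩
  have hev1 : ∀ᶠ c in nhdsWithin cl (Set.Ioi cl), F c < ε := by
    have htd := hcw.tendsto
    rw [hFcl] at htd
    have hev : ∀ᶠ c in nhdsWithin cl (Set.Icc cl cu), F c < ε :=
      htd.eventually (eventually_lt_nhds hε0)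
    have hev' : ∀ᶠ c in nhdsWithin cl (Set.Ioc cl cu), F c < ε :=
      hev.filter_mono (nhdsWithin_mono _ Set.Ioc_subset_Icc_self)
    rwa [nhdsWithin_Ioc_eq_nhdsGT hlt] at hev'
  have hev2 : ∀ᶠ c in nhdsWithin cl (Set.Ioi cl), c < min M cu :=
    eventually_nhdsWithin_of_eventually_nhds (eventually_lt_nhds (lt_min hMcl hlt))
  have hev3 : ∀ᶠ c in nhdsWithin cl (Set.Ioi cl), cl < c := eventually_mem_nhdsWithin
  obtain ⟨c₀, hc₀F, hc₀min, hc₀cl⟩ := (hev1.and (hev2.and hev3)).exists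
  have hc₀M : c₀ < M := lt_of_lt_of_le hc₀min (min_le_left _ _)
  have hc₀cu : c₀ < cu := lt_of_lt_of_le hc₀min (min_le_right _ _)
  obtain ⟨hF0, hF1⟩ := hFmem c₀ hc₀cl hc₀cu.le
  -- the function g
  set g : ℝ → ℝ := fun c => c - V * ((1 - (1 - q*F c)^n)/((n:ℝ) * F c)) with hg
  have hgc₀ : g c₀ ≤ 0 := by
    have h1 : (1 - (1 - q*F c₀)^n)/((n:ℝ)*F c₀) = q * S (F c₀) / n := hphi _ (ne_of_gt hF0)
    have h2 : (n:ℝ) * (1 - q*F c₀)^(n-1) ≤ S (F c₀) := hSge _ hF0.le hF1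
    have hb : 1 - ε ≤ 1 - q*F c₀ := by nlinarith [mul_le_of_le_one_left hF0.le hq1]
    have h3 : (1-ε)^(n-1) ≤ (1 - q*F c₀)^(n-1) :=
      pow_le_pow_left₀ (by linarith) hb (n-1)
    have h4 : (n:ℝ)*(1-ε)^(n-1) ≤ S (F c₀) := le_trans (mul_le_mul_of_nonneg_left h3 hn0.le) h2
    have h5 : V * (q * ((n:ℝ)*(1-ε)^(n-1))/n) ≤ V * (q * S (F c₀) / n) := by
      gcongr
    simp only [hg, h1]
    linarith
  have hgcu : 0 < g cu := by
    have he : V * ((1 - (1 - q * F cu) ^ n) / ((n:ℝ) * F cu)) = V * (1 - (1 - q) ^ n) / n := by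
      rw [hFcu]; ring
    simp only [hg, he]
    linarith
  -- continuity and IVT
  have hsub : Set.Icc c₀ cu ⊆ Set.Icc cl cu := Set.Icc_subset_Icc hc₀cl.le le_rfl
  have hFpos : ∀ c ∈ Set.Icc c₀ cu, 0 < F c := fun c hc =>
    lt_of_lt_of_le hF0 (hFmono.monotoneOn ⟨hc₀cl.le, hc₀cu.le⟩ (hsub hc) hc.1)
  have hgcont : ContinuousOn g (Set.Icc c₀ cu) := by
    have hFc : ContinuousOn F (Set.Icc c₀ cu) := hFcont.mono hsub
    apply ContinuousOn.sub continuousOn_id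
    apply ContinuousOn.mul continuousOn_const
    apply ContinuousOn.div
    · exact continuousOn_const.sub ((continuousOn_const.sub (continuousOn_const.mul hFc)).pow n)
    · exact continuousOn_const.mul hFc
    · intro c hc; exact ne_of_gt (mul_pos hn0 (hFpos c hc))
  obtain ⟨c, hcmem, hgc⟩ := intermediate_value_Icc hc₀cu.le hgcont ⟨hgc₀, hgcu.le⟩
  have hclc : cl < c := lt_of_lt_of_le hc₀cl hcmem.1
  have hccu : c < cu := lt_of_le_of_ne hcmem.2 (by rintro rfl; linarith [hgc, hgcu])
  -- fixed-point formula for points in Ioo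
  have hfix : ∀ y ∈ Set.Ioo cl cu,
      y = V * ((1-(1-q*F y)^n)/((n:ℝ)*F y)) → y = V*(q*S (F y)/n) := by
    intro y hy hyeq
    obtain ⟨hy0, _⟩ := hFmem y hy.1 hy.2.le
    rwa [hphi _ (ne_of_gt hy0)] at hyeq
  have hceq : c = V * ((1-(1-q*F c)^n)/((n:ℝ)*F c)) := by
    simp only [hg] at hgc; linarith
  refine ⟨c, ⟨⟨hclc, hccu⟩, ?_⟩, ?_⟩
  · rw [if_pos hclc]; exact hceq
  · rintro y ⟨hymem, hyeq⟩
    rw [if_pos hymem.1] at hyeq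
    have hyS := hfix y hymem hyeq
    have hcS := hfix c ⟨hclc, hccu⟩ hceq
    obtain ⟨hyF0, hyF1⟩ := hFmem y hymem.1 hymem.2.le
    obtain ⟨hcF0, hcF1⟩ := hFmem c hclc hccu.le
    rcases lt_trichotomy y c with h | h | h
    · exfalso
      have hFy : F y < F c := hFmono ⟨hymem.1.le, hymem.2.le⟩ ⟨hclc.le, hccu.le⟩ h
      have hSS : S (F c) ≤ S (F y) := hSanti _ _ hFy.le hcF1
      have hle : V*(q*S (F c)/n) ≤ V*(q*S (F y)/n) := by gcongr
      rw [← hcS, ← hyS] at hle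
      exact absurd hle (not_le.mpr h)
    · exact h
    · exfalso
      have hFy : F c < F y := hFmono ⟨hclc.le, hccu.le⟩ ⟨hymem.1.le, hymem.2.le⟩ h
      have hSS : S (F y) ≤ S (F c) := hSanti _ _ hFy.le hyF1
      have hle : V*(q*S (F y)/n) ≤ V*(q*S (F c)/n) := by gcongr
      rw [← hyS, ← hcS] at hle
      exact absurd hle (not_le.mpr h)
end

section
/- Suppose cl = 0, and for each n ≥ 1 let c_n ∈ (0, cu) satisfy c_n = V * (1 - (1 - q*F(c_n))^n)/(n*F(c_n)), where F is a continuous strictly increasing CDF on [0, cu] with F(0)=0, q ∈ (0,1], V > 0, and c_n is decreasing in n. Then c_n → 0 as n → ∞. -/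
theorem stmt_8 (cu q V : ℝ) (hcu : 0 < cu) (hq0 : 0 < q) (hq1 : q ≤ 1) (hV : 0 < V)
    (F : ℝ → ℝ) (hFcont : ContinuousOn F (Set.Icc 0 cu))
    (hFmono : StrictMonoOn F (Set.Icc 0 cu)) (hF0 : F 0 = 0)
    (c : ℕ → ℝ) (hc : ∀ n, 1 ≤ n → c n ∈ Set.Ioo 0 cu)
    (heq : ∀ n, 1 ≤ n →
      c n = V * (1 - (1 - q * F (c n)) ^ n) / (n * F (c n)))
    (hdec : ∀ m n : ℕ, m ≤ n → c n ≤ c m) :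
    Filter.Tendsto c Filter.atTop (nhds 0) := by
  -- main claim: for every ε ∈ (0, cu) there is N ≥ 1 with c N < ε
  have key : ∀ ε : ℝ, 0 < ε → ε < cu → ∃ N : ℕ, 1 ≤ N ∧ c N < ε := by
    intro ε hε hεcu
    by_contra h
    push_neg at h
    have hεmem : ε ∈ Set.Icc (0:ℝ) cu := ⟨le_of_lt hε, le_of_lt hεcu⟩
    have hFε : 0 < F ε := by
      have := hFmono ⟨le_refl 0, le_of_lt hcu⟩ hεmem hε
      rwa [hF0] at this
    -- choose a large even n
    set n : ℕ := 2 * (⌈V / (ε * F ε)⌉₊ + 1) with hn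
    have hn1 : 1 ≤ n := by omega
    have hmem := hc n hn1
    have hcnmem : c n ∈ Set.Icc (0:ℝ) cu := ⟨le_of_lt hmem.1, le_of_lt hmem.2⟩
    have hεcn : ε ≤ c n := h n hn1
    have hFcn : F ε ≤ F (c n) := by
      rcases eq_or_lt_of_le hεcn with he | hl
      · rw [he]
      · exact le_of_lt (hFmono hεmem hcnmem hl)
    have hFcnpos : 0 < F (c n) := lt_of_lt_of_le hFε hFcn
    have hnpos : (0:ℝ) < (n:ℝ) := by exact_mod_cast hn1
    have hden : (n:ℝ) * F (c n) ≠ 0 := by positivity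
    have hprod : c n * ((n:ℝ) * F (c n)) = V * (1 - (1 - q * F (c n)) ^ n) := by
      have h' := heq n hn1
      rwa [eq_div_iff hden] at h'
    have heven : Even n := ⟨⌈V / (ε * F ε)⌉₊ + 1, by omega⟩
    have hpow : (0:ℝ) ≤ (1 - q * F (c n)) ^ n := heven.pow_nonneg _
    have hle : c n * ((n:ℝ) * F (c n)) ≤ V := by
      rw [hprod]
      nlinarith
    have hlow : ε * ((n:ℝ) * F ε) ≤ c n * ((n:ℝ) * F (c n)) := by
      have h1 : (n:ℝ) * F ε ≤ (n:ℝ) * F (c n) := by nlinarith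
      exact mul_le_mul hεcn h1 (by positivity) (le_of_lt hmem.1)
    have hbig : V < ε * ((n:ℝ) * F ε) := by
      have h1 : V / (ε * F ε) < (n:ℝ) := by
        have h2 : V / (ε * F ε) ≤ (⌈V / (ε * F ε)⌉₊ : ℝ) := Nat.le_ceil _
        have h3 : (⌈V / (ε * F ε)⌉₊ : ℝ) < (n:ℝ) := by
          have : ⌈V / (ε * F ε)⌉₊ < n := by omega
          exact_mod_cast this
        linarith
      have hεF : 0 < ε * F ε := by positivity
      calc V = (V / (ε * F ε)) * (ε * F ε) := by field_simp
        _ < (n:ℝ) * (ε * F ε) := by exact mul_lt_mul_of_pos_right h1 hεF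
        _ = ε * ((n:ℝ) * F ε) := by ring
    linarith
  -- now conclude the limit
  rw [Metric.tendsto_atTop]
  intro ε hε
  set ε' : ℝ := min (ε / 2) (cu / 2) with hε'
  have hε'pos : 0 < ε' := by
    apply lt_min <;> linarith
  have hε'cu : ε' < cu := lt_of_le_of_lt (min_le_right _ _) (by linarith)
  have hε'ε : ε' < ε := lt_of_le_of_lt (min_le_left _ _) (by linarith)
  obtain ⟨N, hN1, hNlt⟩ := key ε' hε'pos hε'cu
  refine ⟨N, fun n hn => ?_⟩
  have hpos := (hc n (le_trans hN1 hn)).1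
  have : c n ≤ c N := hdec N n hn
  rw [Real.dist_eq, sub_zero, abs_of_pos hpos]
  linarith
end

section
/- Suppose cl > 0 and for each n, c_n ∈ (cl, cu) satisfies c_n * n * F(c_n) = V * (1 - (1 - q*F(c_n))^n) with c_n → cl and P_n = 1 - (1-q*F(c_n))^n converging to a strictly positive constant. Then the sequence F(c_n) is Θ(1/n), i.e. there exist constants k1, k2 > 0 and N such that for all n > N, k1/n ≤ F(c_n) ≤ k2/n. -/
theorem stmt_11 (cl cu q V : ℝ) (hcl : 0 < cl) (hlt : cl < cu)
    (hq0 : 0 < q) (hq1 : q ≤ 1) (hV : 0 < V)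
    (F : ℝ → ℝ) (c : ℕ → ℝ) (hc : ∀ n, c n ∈ Set.Ioo cl cu)
    (heq : ∀ n : ℕ, c n * n * F (c n) = V * (1 - (1 - q * F (c n)) ^ n))
    (hclim : Filter.Tendsto c Filter.atTop (nhds cl))
    (Pinf : ℝ) (hPinf : 0 < Pinf)
    (hPlim : Filter.Tendsto (fun n : ℕ => 1 - (1 - q * F (c n)) ^ n)
      Filter.atTop (nhds Pinf)) :
    ∃ k₁ k₂ : ℝ, ∃ N : ℕ, 0 < k₁ ∧ 0 < k₂ ∧
      ∀ n : ℕ, N < n → k₁ / n ≤ F (c n) ∧ F (c n) ≤ k₂ / n := by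
  have hcu : 0 < cu := hcl.trans hlt
  obtain ⟨N, hN⟩ := Filter.eventually_atTop.mp
    (hPlim.eventually (Ioo_mem_nhds (by linarith : Pinf / 2 < Pinf)
      (by linarith : Pinf < Pinf + 1)))
  refine ⟨V * (Pinf / 2) / cu, V * (Pinf + 1) / cl, N, by positivity, by positivity, ?_⟩
  intro n hn
  obtain ⟨hc1, hc2⟩ := hc n
  have hcn0 : 0 < c n := hcl.trans hc1
  have hnpos : (0 : ℝ) < (n : ℝ) := by
    exact_mod_cast Nat.pos_of_ne_zero (by omega)
  obtain ⟨hP1, hP2⟩ := hN n hn.le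
  set P := 1 - (1 - q * F (c n)) ^ n with hPdef
  have hFeq : F (c n) = V * P / (c n * n) := by
    rw [eq_div_iff (by positivity)]
    linear_combination heq n
  constructor
  · rw [hFeq, div_div]
    apply div_le_div₀ (by nlinarith) (by nlinarith) (by positivity)
    nlinarith
  · rw [hFeq, div_div]
    apply div_le_div₀ (by nlinarith) (by nlinarith) (by positivity)
    nlinarith
end

section
/- Let q ∈ (0,1], n ≥ 1, F ∈ (0,1]. For each m with 1 ≤ m ≤ n, define Φ^m = q * Σ_{k=m-1}^{n-1} binom(n-1,k) F^k (1-F)^{n-1-k} * Σ_{t=m-1}^{k} binom(k,t) q^t (1-q)^{k-t} / (t+1). Then Σ_{m=1}^{n} Φ^m = q. -/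
/-- The probability that an agent wins the `m`-th prize in the symmetric
equilibrium of the multi-prize crowdsearch game. -/
noncomputable def crowdPhi (n : ℕ) (q F : ℝ) (m : ℕ) : ℝ :=
  q * ∑ k ∈ Finset.Icc (m - 1) (n - 1),
        (Nat.choose (n - 1) k : ℝ) * F ^ k * (1 - F) ^ (n - 1 - k) *
          ∑ t ∈ Finset.Icc (m - 1) k,
            (Nat.choose k t : ℝ) * q ^ t * (1 - q) ^ (k - t) / (t + 1)

lemma icc_zero_range (k : ℕ) : Finset.Icc 0 k = Finset.range (k + 1) := by
  ext x; simp [Nat.lt_succ_iff]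

lemma binom_sum (x : ℝ) (k : ℕ) :
    ∑ t ∈ Finset.Icc 0 k, (Nat.choose k t : ℝ) * x ^ t * (1 - x) ^ (k - t) = 1 := by
  rw [icc_zero_range]
  have h := add_pow x (1 - x) k
  have hx : x + (1 - x) = 1 := by ring
  rw [hx, one_pow] at h
  conv_rhs => rw [h]
  apply Finset.sum_congr rfl
  intro t _
  ring

theorem stmt_15 (n : ℕ) (hn : 1 ≤ n) (q F : ℝ)
    (hq0 : 0 < q) (hq1 : q ≤ 1) (hF0 : 0 < F) (hF1 : F ≤ 1) :
    ∑ m ∈ Finset.Icc 1 n, crowdPhi n q F m = q := by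
  unfold crowdPhi
  rw [← Finset.mul_sum]
  have hinner : ∀ k : ℕ,
      ∑ m ∈ Finset.Icc 1 (k + 1), ∑ t ∈ Finset.Icc (m - 1) k,
        (Nat.choose k t : ℝ) * q ^ t * (1 - q) ^ (k - t) / (t + 1) = 1 := by
    intro k
    rw [Finset.sum_comm' (t' := Finset.Icc 0 k) (s' := fun t => Finset.Icc 1 (t + 1))
      (by intro m t; simp only [Finset.mem_Icc]; omega)]
    have step : ∀ t ∈ Finset.Icc 0 k,
        (∑ m ∈ Finset.Icc 1 (t + 1),
          (Nat.choose k t : ℝ) * q ^ t * (1 - q) ^ (k - t) / (t + 1))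
        = (Nat.choose k t : ℝ) * q ^ t * (1 - q) ^ (k - t) := by
      intro t _
      rw [Finset.sum_const, Nat.card_Icc, nsmul_eq_mul]
      have h : ((t : ℝ) + 1) ≠ 0 := by positivity
      simp only [Nat.add_sub_cancel]
      push_cast
      field_simp
    rw [Finset.sum_congr rfl step, binom_sum q k]
  have houter :
      ∑ m ∈ Finset.Icc 1 n, ∑ k ∈ Finset.Icc (m - 1) (n - 1),
        (Nat.choose (n - 1) k : ℝ) * F ^ k * (1 - F) ^ (n - 1 - k) *
          ∑ t ∈ Finset.Icc (m - 1) k,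
            (Nat.choose k t : ℝ) * q ^ t * (1 - q) ^ (k - t) / (t + 1)
      = ∑ k ∈ Finset.Icc 0 (n - 1),
          (Nat.choose (n - 1) k : ℝ) * F ^ k * (1 - F) ^ (n - 1 - k) := by
    rw [Finset.sum_comm' (t' := Finset.Icc 0 (n - 1))
      (s' := fun k => Finset.Icc 1 (k + 1))
      (by intro m k; simp only [Finset.mem_Icc]; omega)]
    apply Finset.sum_congr rfl
    intro k _
    rw [← Finset.mul_sum, hinner k, mul_one]
  rw [houter, binom_sum F (n - 1), mul_one]
end

section
/- With Φ^m defined as above, Φ^m > Φ^{m+1} for each m with 1 ≤ m ≤ n-1, provided 0 < F ≤ 1 and 0 < q ≤ 1 (with q < 1 or the relevant binomial terms positive). -/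
noncomputable def cA (n : ℕ) (F : ℝ) (k : ℕ) : ℝ :=
  (Nat.choose (n - 1) k : ℝ) * F ^ k * (1 - F) ^ (n - 1 - k)

noncomputable def cg (q : ℝ) (k t : ℕ) : ℝ :=
  (Nat.choose k t : ℝ) * q ^ t * (1 - q) ^ (k - t) / (t + 1)

theorem stmt_16 (n : ℕ) (q F : ℝ)
    (hq0 : 0 < q) (hq1 : q ≤ 1) (hF0 : 0 < F) (hF1 : F ≤ 1)
    (hnd : q < 1 ∨ F < 1)
    (m : ℕ) (hm1 : 1 ≤ m) (hmn : m ≤ n - 1) :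
    crowdPhi n q F (m + 1) < crowdPhi n q F m := by
  have hq' : (0:ℝ) ≤ 1 - q := by linarith
  have hF' : (0:ℝ) ≤ 1 - F := by linarith
  have hm' : m - 1 + 1 = m := Nat.succ_pred_eq_of_pos hm1
  have hmn' : m - 1 ≤ n - 1 := le_trans (Nat.sub_le m 1) hmn
  have hA : ∀ k, 0 ≤ cA n F k := fun k =>
    mul_nonneg (mul_nonneg (Nat.cast_nonneg _) (pow_nonneg hF0.le _)) (pow_nonneg hF' _)
  have hg : ∀ k t, 0 ≤ cg q k t := fun k t =>
    div_nonneg (mul_nonneg (mul_nonneg (Nat.cast_nonneg _) (pow_nonneg hq0.le _))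
      (pow_nonneg hq' _)) (by positivity)
  have split : ∀ (f : ℕ → ℝ) (a b : ℕ), a ≤ b →
      ∑ k ∈ Finset.Icc a b, f k = f a + ∑ k ∈ Finset.Icc (a+1) b, f k := by
    intro f a b hab
    rw [Finset.Icc_add_one_left_eq_Ioc, ← Finset.Ioc_insert_left hab,
      Finset.sum_insert Finset.left_notMem_Ioc]
  unfold crowdPhi
  simp only [Nat.add_sub_cancel]
  show q * ∑ k ∈ Finset.Icc m (n-1), cA n F k * ∑ t ∈ Finset.Icc m k, cg q k t
      < q * ∑ k ∈ Finset.Icc (m-1) (n-1), cA n F k * ∑ t ∈ Finset.Icc (m-1) k, cg q k t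
  have key : ∑ k ∈ Finset.Icc m (n-1), cA n F k * ∑ t ∈ Finset.Icc m k, cg q k t
      < ∑ k ∈ Finset.Icc (m-1) (n-1), cA n F k * ∑ t ∈ Finset.Icc (m-1) k, cg q k t := by
    rw [split _ (m-1) (n-1) hmn', hm']
    have h1 : ∀ k ∈ Finset.Icc m (n-1),
        cA n F k * ∑ t ∈ Finset.Icc (m-1) k, cg q k t
          = cA n F k * cg q k (m-1) + cA n F k * ∑ t ∈ Finset.Icc m k, cg q k t := by
      intro k hk
      have hk' : m - 1 ≤ k := le_trans (Nat.sub_le m 1) (Finset.mem_Icc.mp hk).1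
      rw [split (cg q k) (m-1) k hk', hm']
      ring
    rw [Finset.sum_congr rfl h1, Finset.sum_add_distrib]
    have hpos : 0 < cA n F (m-1) * ∑ t ∈ Finset.Icc (m-1) (m-1), cg q (m-1) t
        + ∑ k ∈ Finset.Icc m (n-1), cA n F k * cg q k (m-1) := by
      have hgpos : ∀ k, m - 1 ≤ k → 0 < q → ((0:ℝ) < 1 - q ∨ k = m - 1) → 0 < cg q k (m-1) := by
        intro k hk _ hcase
        have hc : 0 < (Nat.choose k (m-1) : ℝ) := by
          exact_mod_cast Nat.choose_pos hk
        have hpowq : (0:ℝ) < q ^ (m-1) := pow_pos hq0 _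
        have hpow1q : (0:ℝ) < (1 - q) ^ (k - (m-1)) := by
          rcases hcase with h | h
          · exact pow_pos h _
          · rw [h, Nat.sub_self, pow_zero]; norm_num
        exact div_pos (mul_pos (mul_pos hc hpowq) hpow1q) (by positivity)
      rcases hnd with hqlt | hFlt
      · -- use k = n - 1
        have hmem : n - 1 ∈ Finset.Icc m (n-1) := Finset.mem_Icc.mpr ⟨hmn, le_refl _⟩
        have hApos : 0 < cA n F (n-1) := by
          unfold cA
          have : (0:ℝ) < (Nat.choose (n-1) (n-1) : ℝ) := by
            exact_mod_cast Nat.choose_pos (le_refl _)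
          rw [Nat.sub_self, pow_zero]
          have := pow_pos hF0 (n-1)
          nlinarith [Nat.choose_self (n-1)]
        have hterm : 0 < cA n F (n-1) * cg q (n-1) (m-1) :=
          mul_pos hApos (hgpos _ hmn' hq0 (Or.inl (by linarith)))
        have hsum : 0 < ∑ k ∈ Finset.Icc m (n-1), cA n F k * cg q k (m-1) :=
          Finset.sum_pos' (fun k _ => mul_nonneg (hA k) (hg k _)) ⟨n-1, hmem, hterm⟩
        have h0 : 0 ≤ cA n F (m-1) * ∑ t ∈ Finset.Icc (m-1) (m-1), cg q (m-1) t :=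
          mul_nonneg (hA _) (Finset.sum_nonneg fun t _ => hg _ t)
        linarith
      · -- F < 1 : use the k = m - 1 term
        have hApos : 0 < cA n F (m-1) := by
          unfold cA
          have hc : (0:ℝ) < (Nat.choose (n-1) (m-1) : ℝ) := by
            exact_mod_cast Nat.choose_pos hmn'
          exact mul_pos (mul_pos hc (pow_pos hF0 _)) (pow_pos (by linarith) _)
        have hsum0 : 0 < ∑ t ∈ Finset.Icc (m-1) (m-1), cg q (m-1) t := by
          rw [Finset.Icc_self, Finset.sum_singleton]
          exact hgpos _ (le_refl _) hq0 (Or.inr rfl)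
        have hsum : 0 ≤ ∑ k ∈ Finset.Icc m (n-1), cA n F k * cg q k (m-1) :=
          Finset.sum_nonneg fun k _ => mul_nonneg (hA k) (hg k _)
        nlinarith [mul_pos hApos hsum0]
    linarith
  exact mul_lt_mul_of_pos_left key hq0
end

section
/- Let n ≥ 1, q ∈ (0,1], F ∈ (0,1], and define P^m = Σ_{k=m}^{n} binom(n,k) F^k (1-F)^{n-k} Σ_{t=m}^{k} binom(k,t) q^t (1-q)^{k-t} (the probability that at least m of n independent searchers, each searching with probability F and succeeding with probability q, find the object). Then n*F*Φ^m = P^m, where Φ^m is as defined in the multi-prize equilibrium. -/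
/-- The probability that at least `m` of `n` independent searchers, each
searching with probability `F` and succeeding with probability `q`, find
the object. -/
noncomputable def crowdP (n : ℕ) (q F : ℝ) (m : ℕ) : ℝ :=
  ∑ k ∈ Finset.Icc m n,
    (Nat.choose n k : ℝ) * F ^ k * (1 - F) ^ (n - k) *
      ∑ t ∈ Finset.Icc m k, (Nat.choose k t : ℝ) * q ^ t * (1 - q) ^ (k - t)


private lemma crowd_choose_cast (n k : ℕ) :
    ((n:ℝ)+1) * ((Nat.choose n k : ℕ) : ℝ) = ((Nat.choose (n+1) (k+1) : ℕ) : ℝ) * ((k:ℝ)+1) := by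
  exact_mod_cast congrArg (Nat.cast : ℕ → ℝ) (Nat.add_one_mul_choose_eq n k)

private lemma crowd_key (n m : ℕ) (q F : ℝ) :
    ((n:ℝ)+1) * F * (q * ∑ k ∈ Finset.Icc m n,
        (Nat.choose n k : ℝ) * F ^ k * (1 - F) ^ (n - k) *
          ∑ t ∈ Finset.Icc m k,
            (Nat.choose k t : ℝ) * q ^ t * (1 - q) ^ (k - t) / (t + 1)) =
    ∑ k ∈ Finset.Icc (m+1) (n+1),
      (Nat.choose (n+1) k : ℝ) * F ^ k * (1 - F) ^ (n + 1 - k) *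
        ∑ t ∈ Finset.Icc (m+1) k, (Nat.choose k t : ℝ) * q ^ t * (1 - q) ^ (k - t) := by
  rw [← Finset.map_add_right_Icc m n 1, Finset.sum_map, Finset.mul_sum, Finset.mul_sum]
  refine Finset.sum_congr rfl fun k hk => ?_
  simp only [Finset.mem_Icc] at hk
  simp only [addRightEmbedding_apply]
  rw [← Finset.map_add_right_Icc m k 1, Finset.sum_map, Finset.mul_sum, Finset.mul_sum,
    Finset.mul_sum, Finset.mul_sum]
  refine Finset.sum_congr rfl fun t ht => ?_
  simp only [Finset.mem_Icc] at ht
  simp only [addRightEmbedding_apply]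
  have h1 : n + 1 - (k + 1) = n - k := by omega
  have h2 : k + 1 - (t + 1) = k - t := by omega
  rw [h1, h2]
  have e1 := crowd_choose_cast n k
  have e2 := crowd_choose_cast k t
  have ht1 : ((t:ℝ)+1) ≠ 0 := by positivity
  have e3 : ((n:ℝ)+1) * (Nat.choose n k : ℝ) * (Nat.choose k t : ℝ) =
      (Nat.choose (n+1) (k+1) : ℝ) * (Nat.choose (k+1) (t+1) : ℝ) * ((t:ℝ)+1) := by
    linear_combination (Nat.choose k t : ℝ) * e1 + (Nat.choose (n+1) (k+1) : ℝ) * e2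
  field_simp
  linear_combination (F * F^k * q * q^t * (1-F)^(n-k) * (1-q)^(k-t)) * e3

theorem stmt_17 (n : ℕ) (hn : 1 ≤ n) (q F : ℝ)
    (hq0 : 0 < q) (hq1 : q ≤ 1) (hF0 : 0 < F) (hF1 : F ≤ 1)
    (m : ℕ) (hm1 : 1 ≤ m) (hmn : m ≤ n) :
    (n : ℝ) * F * crowdPhi n q F m = crowdP n q F m := by
  obtain ⟨n, rfl⟩ : ∃ n', n = n' + 1 := ⟨n - 1, (Nat.succ_pred_eq_of_pos hn).symm⟩
  obtain ⟨m, rfl⟩ : ∃ m', m = m' + 1 := ⟨m - 1, (Nat.succ_pred_eq_of_pos hm1).symm⟩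
  unfold crowdPhi crowdP
  simp only [Nat.add_sub_cancel]
  push_cast
  exact crowd_key n m q F
end

section
/- Let n ≥ 1, q ∈ (0,1], F ∈ (0,1]. Then q * Σ_{k=0}^{n-1} binom(n-1,k) F^k (1-F)^{n-1-k} * Σ_{t=0}^{k} binom(k,t) q^t (1-q)^{k-t}/(t+2) = 1/(n*F) + ((1 - q*F)^{n+1} - 1)/(n*(n+1)*q*F^2). -/
lemma P1 (M : ℕ) (x y : ℝ) :
    ((M:ℝ)+1) * x * ∑ k ∈ Finset.range (M+1), (Nat.choose M k : ℝ) * x^k * y^(M-k) / ((k:ℝ)+1)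
    = (x+y)^(M+1) - y^(M+1) := by
  rw [Finset.mul_sum]
  rw [Finset.sum_congr rfl (fun k hk => show ((M:ℝ)+1) * x * ((Nat.choose M k : ℝ) * x^k * y^(M-k) / ((k:ℝ)+1)) = (Nat.choose (M+1) (k+1) : ℝ) * (x^(k+1) * y^(M-k)) from ?_)]
  · conv_rhs => rw [add_pow, Finset.sum_range_succ']
    simp only [Nat.succ_sub_succ, pow_zero, one_mul, Nat.choose_zero_right, Nat.cast_one,
      Nat.sub_zero, mul_one, add_sub_cancel_right]
    exact Finset.sum_congr rfl (fun k _ => by ring)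
  · have h : ((M:ℝ)+1) * (Nat.choose M k : ℝ) = ((Nat.choose (M+1) (k+1)):ℝ) * ((k:ℝ)+1) := by
      exact_mod_cast Nat.add_one_mul_choose_eq M k
    have hk1 : ((k:ℝ)+1) ≠ 0 := by positivity
    field_simp
    linear_combination (x^(k+1)*y^(M-k)) * h
lemma P2 (M : ℕ) (x y : ℝ) :
    ((M:ℝ)+1) * ((M:ℝ)+2) * x^2 * ∑ k ∈ Finset.range (M+1),
      (Nat.choose M k : ℝ) * x^k * y^(M-k) / (((k:ℝ)+1)*((k:ℝ)+2))
    = (x+y)^(M+2) - y^(M+2) - ((M:ℝ)+2)*x*y^(M+1) := by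
  rw [Finset.mul_sum]
  rw [Finset.sum_congr rfl (fun k hk => show ((M:ℝ)+1) * ((M:ℝ)+2) * x^2 * ((Nat.choose M k : ℝ) * x^k * y^(M-k) / (((k:ℝ)+1)*((k:ℝ)+2))) = (Nat.choose (M+2) (k+2) : ℝ) * (x^(k+2) * y^(M-k)) from ?_)]
  · conv_rhs => rw [add_pow, Finset.sum_range_succ', Finset.sum_range_succ']
    simp only [Nat.succ_sub_succ, pow_zero, one_mul, Nat.choose_zero_right, Nat.cast_one,
      Nat.sub_zero, mul_one]
    push_cast [Nat.choose_one_right]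
    rw [show ∀ a b c : ℝ, a + b + c - c - ((M:ℝ)+2)*x*y^(M+1) = a + (b - ((M:ℝ)+2)*x*y^(M+1)) from fun a b c => by ring]
    rw [show x^1*y^(M+1)*((M:ℝ)+2) - ((M:ℝ)+2)*x*y^(M+1) = 0 from by ring, add_zero]
    exact Finset.sum_congr rfl (fun k _ => by ring)
  · have h1 : ((M:ℝ)+1) * (Nat.choose M k : ℝ) = ((Nat.choose (M+1) (k+1)):ℝ) * ((k:ℝ)+1) := by
      exact_mod_cast Nat.add_one_mul_choose_eq M k
    have h2 : ((M:ℝ)+2) * (Nat.choose (M+1) (k+1) : ℝ) = ((Nat.choose (M+2) (k+2)):ℝ) * ((k:ℝ)+2) := by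
      exact_mod_cast Nat.add_one_mul_choose_eq (M+1) (k+1)
    have hk1 : ((k:ℝ)+1) ≠ 0 := by positivity
    have hk2 : ((k:ℝ)+2) ≠ 0 := by positivity
    field_simp
    linear_combination (x^(k+2)*y^(M-k)*((M:ℝ)+2)) * h1 + (x^(k+2)*y^(M-k)*((k:ℝ)+1)) * h2
lemma inner (k : ℕ) (q : ℝ) (hq : q ≠ 0) :
    q * ∑ t ∈ Finset.range (k+1), (Nat.choose k t : ℝ) * q^t * (1-q)^(k-t) / ((t:ℝ)+2)
    = 1/((k:ℝ)+1) - 1/(((k:ℝ)+1)*((k:ℝ)+2)*q) + (1-q)^(k+2)/(((k:ℝ)+1)*((k:ℝ)+2)*q) := by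
  have hk1 : ((k:ℝ)+1) ≠ 0 := by positivity
  have hk2 : ((k:ℝ)+2) ≠ 0 := by positivity
  rw [Finset.sum_congr rfl (fun t ht => show (Nat.choose k t : ℝ) * q^t * (1-q)^(k-t) / ((t:ℝ)+2)
      = (Nat.choose k t : ℝ) * q^t * (1-q)^(k-t) / ((t:ℝ)+1)
        - (Nat.choose k t : ℝ) * q^t * (1-q)^(k-t) / (((t:ℝ)+1)*((t:ℝ)+2)) from ?_)]
  · rw [Finset.sum_sub_distrib]
    have hA := P1 k q (1-q)
    have hB := P2 k q (1-q)
    rw [show q + (1-q) = 1 by ring, one_pow] at hA hB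
    set SA := ∑ t ∈ Finset.range (k+1), (Nat.choose k t : ℝ) * q^t * (1-q)^(k-t) / ((t:ℝ)+1) with hSAdef
    set SB := ∑ t ∈ Finset.range (k+1), (Nat.choose k t : ℝ) * q^t * (1-q)^(k-t) / (((t:ℝ)+1)*((t:ℝ)+2)) with hSBdef
    have hSA : SA = (1 - (1-q)^(k+1))/(((k:ℝ)+1)*q) := by
      rw [eq_div_iff (mul_ne_zero hk1 hq)]; linear_combination hA
    have hSB : SB = (1 - (1-q)^(k+2) - ((k:ℝ)+2)*q*(1-q)^(k+1))/(((k:ℝ)+1)*((k:ℝ)+2)*q^2) := by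
      rw [eq_div_iff (by simp [hk1, hk2, hq, pow_eq_zero_iff] : ((k:ℝ)+1)*((k:ℝ)+2)*q^2 ≠ 0)]
      linear_combination hB
    rw [hSA, hSB]
    field_simp
    ring
  · have ht1 : ((t:ℝ)+1) ≠ 0 := by positivity
    have ht2 : ((t:ℝ)+2) ≠ 0 := by positivity
    field_simp
    ring
theorem stmt_19 (n : ℕ) (hn : 1 ≤ n) (q F : ℝ)
    (hq0 : 0 < q) (hq1 : q ≤ 1) (hF0 : 0 < F) (hF1 : F ≤ 1) :
    q * ∑ k ∈ Finset.range n,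
          (Nat.choose (n - 1) k : ℝ) * F ^ k * (1 - F) ^ (n - 1 - k) *
            ∑ t ∈ Finset.range (k + 1),
              (Nat.choose k t : ℝ) * q ^ t * (1 - q) ^ (k - t) / (t + 2)
      = 1 / (n * F) + ((1 - q * F) ^ (n + 1) - 1) / (n * (n + 1) * q * F ^ 2) := by
  obtain ⟨m, rfl⟩ : ∃ m, n = m + 1 := ⟨n - 1, (Nat.succ_pred_eq_of_pos hn).symm⟩
  simp only [Nat.add_sub_cancel]
  have hq : q ≠ 0 := ne_of_gt hq0
  have hF : F ≠ 0 := ne_of_gt hF0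
  have hm1 : ((m:ℝ)+1) ≠ 0 := by positivity
  have hm2 : ((m:ℝ)+2) ≠ 0 := by positivity
  rw [Finset.mul_sum]
  rw [Finset.sum_congr rfl (fun k hk => show
      q * ((Nat.choose m k : ℝ) * F ^ k * (1 - F) ^ (m - k) *
            ∑ t ∈ Finset.range (k + 1),
              (Nat.choose k t : ℝ) * q ^ t * (1 - q) ^ (k - t) / ((t:ℝ) + 2))
      = (Nat.choose m k : ℝ) * F ^ k * (1 - F) ^ (m-k) / ((k:ℝ)+1)
        - (1/q) * ((Nat.choose m k : ℝ) * F ^ k * (1 - F) ^ (m-k) / (((k:ℝ)+1)*((k:ℝ)+2)))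
        + ((1-q)^2/q) * ((Nat.choose m k : ℝ) * (F*(1-q)) ^ k * (1 - F) ^ (m-k) / (((k:ℝ)+1)*((k:ℝ)+2))) from ?_)]
  · rw [Finset.sum_add_distrib, Finset.sum_sub_distrib, ← Finset.mul_sum, ← Finset.mul_sum]
    have hU1 := P1 m F (1-F)
    have hU2 := P2 m F (1-F)
    have hU3 := P2 m (F*(1-q)) (1-F)
    rw [show F + (1-F) = 1 by ring, one_pow] at hU1 hU2
    rw [show F*(1-q) + (1-F) = 1 - q*F by ring] at hU3
    set U1 := ∑ k ∈ Finset.range (m+1), (Nat.choose m k : ℝ) * F ^ k * (1 - F) ^ (m-k) / ((k:ℝ)+1) with hU1d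
    set U2 := ∑ k ∈ Finset.range (m+1), (Nat.choose m k : ℝ) * F ^ k * (1 - F) ^ (m-k) / (((k:ℝ)+1)*((k:ℝ)+2)) with hU2d
    set U3 := ∑ k ∈ Finset.range (m+1), (Nat.choose m k : ℝ) * (F*(1-q)) ^ k * (1 - F) ^ (m-k) / (((k:ℝ)+1)*((k:ℝ)+2)) with hU3d
    have hU1' : U1 = (1 - (1-F)^(m+1))/(((m:ℝ)+1)*F) := by
      rw [eq_div_iff (mul_ne_zero hm1 hF)]; linear_combination hU1
    have hU2' : U2 = (1 - (1-F)^(m+2) - ((m:ℝ)+2)*F*(1-F)^(m+1))/(((m:ℝ)+1)*((m:ℝ)+2)*F^2) := by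
      rw [eq_div_iff (by simp [hm1, hm2, hF, pow_eq_zero_iff] : ((m:ℝ)+1)*((m:ℝ)+2)*F^2 ≠ 0)]
      linear_combination hU2
    push_cast
    by_cases hq1' : q = 1
    · subst hq1'
      rw [hU1', hU2']
      norm_num
      field_simp
      ring
    · have hq' : (1:ℝ) - q ≠ 0 := sub_ne_zero.mpr (Ne.symm hq1')
      have hU3' : U3 = ((1-q*F)^(m+2) - (1-F)^(m+2) - ((m:ℝ)+2)*(F*(1-q))*(1-F)^(m+1))/(((m:ℝ)+1)*((m:ℝ)+2)*(F*(1-q))^2) := by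
        rw [eq_div_iff (by simp [hm1, hm2, hF, hq', pow_eq_zero_iff] : ((m:ℝ)+1)*((m:ℝ)+2)*(F*(1-q))^2 ≠ 0)]
        linear_combination hU3
      rw [hU1', hU2', hU3']
      field_simp
      ring
  · have hk1 : ((k:ℝ)+1) ≠ 0 := by positivity
    have hk2 : ((k:ℝ)+2) ≠ 0 := by positivity
    have h := inner k q hq
    calc q * ((Nat.choose m k : ℝ) * F ^ k * (1 - F) ^ (m - k) *
            ∑ t ∈ Finset.range (k + 1),
              (Nat.choose k t : ℝ) * q ^ t * (1 - q) ^ (k - t) / ((t:ℝ) + 2))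
        = ((Nat.choose m k : ℝ) * F ^ k * (1 - F) ^ (m - k)) *
            (q * ∑ t ∈ Finset.range (k + 1),
              (Nat.choose k t : ℝ) * q ^ t * (1 - q) ^ (k - t) / ((t:ℝ) + 2)) := by ring
      _ = ((Nat.choose m k : ℝ) * F ^ k * (1 - F) ^ (m - k)) *
            (1/((k:ℝ)+1) - 1/(((k:ℝ)+1)*((k:ℝ)+2)*q) + (1-q)^(k+2)/(((k:ℝ)+1)*((k:ℝ)+2)*q)) := by rw [h]
      _ = _ := by rw [mul_pow]; field_simp; ring
end
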